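/- Assume (G,E,φ) is pseudo-free. Two germs [α₁,g₁,β₁; η₁] and [α₂,g₂,β₂; η₂] in the groupoid of germs of the S_{G,E}-action on E^∞ (with |β₁| ≤ |β₂|) are equal if and only if there exist a finite path γ and an infinite path ξ with α₂ = α₁(g₁·γ), g₂ = φ(g₁,γ), β₂ = β₁γ, and η₁ = η₂ = β₁γξ. -/

import Mathlib

noncomputable section

open scoped Classical

/-! ### Corona groups -/

section CoronaSec

variable (G : Type*) [Group G]

def eventuallyTrivial : Subgroup (ℕ → G) where
  carrier := {f | ∃ N, ∀ n, N ≤ n → f n = 1}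
  one_mem' := ⟨0, fun n _ => rfl⟩
  mul_mem' := by
    rintro a b ⟨N, hN⟩ ⟨M, hM⟩
    exact ⟨max N M, fun n hn => by
      simp [Pi.mul_apply, hN n (le_trans (le_max_left _ _) hn),
        hM n (le_trans (le_max_right _ _) hn)]⟩
  inv_mem' := by
    rintro a ⟨N, hN⟩
    exact ⟨N, fun n hn => by simp [Pi.inv_apply, hN n hn]⟩

instance eventuallyTrivial_normal : (eventuallyTrivial G).Normal := by
  constructor
  rintro a ⟨N, hN⟩ g
  exact ⟨N, fun n hn => by simp [Pi.mul_apply, Pi.inv_apply, hN n hn]⟩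

def lshift : (ℕ → G) →* (ℕ → G) where
  toFun f := fun n => f (n + 1)
  map_one' := rfl
  map_mul' a b := rfl

def rshift : (ℕ → G) →* (ℕ → G) where
  toFun f := fun n => if n = 0 then 1 else f (n - 1)
  map_one' := by funext n; by_cases h : n = 0 <;> simp [h]
  map_mul' a b := by funext n; by_cases h : n = 0 <;> simp [h]

lemma lshift_comap : eventuallyTrivial G ≤ (eventuallyTrivial G).comap (lshift G) := by
  rintro f ⟨N, hN⟩
  exact ⟨N, fun n hn => hN (n + 1) (by omega)⟩

lemma rshift_comap : eventuallyTrivial G ≤ (eventuallyTrivial G).comap (rshift G) := by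
  rintro f ⟨N, hN⟩
  refine ⟨N + 1, fun n hn => ?_⟩
  show (if n = 0 then 1 else f (n - 1)) = 1
  rw [if_neg (by omega)]
  exact hN (n - 1) (by omega)

abbrev Corona : Type _ := (ℕ → G) ⧸ eventuallyTrivial G

def coronaRho : Corona G →* Corona G :=
  QuotientGroup.map _ _ (rshift G) (rshift_comap G)

def coronaLam : Corona G →* Corona G :=
  QuotientGroup.map _ _ (lshift G) (lshift_comap G)

def coronaRhoZ : ℤ → Corona G → Corona G
  | Int.ofNat n => (⇑(coronaRho G))^[n]
  | Int.negSucc n => (⇑(coronaLam G))^[n + 1]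

end CoronaSec

/-! ### Graphs, paths and self-similar actions -/

structure SSGraph (V : Type*) (E : Type*) where
  r : E → V
  d : E → V

namespace SSGraph

variable {V E : Type*}

abbrev Pth (V E : Type*) := V × List E

def IsPath (Γ : SSGraph V E) (p : Pth V E) : Prop :=
  (∀ e ∈ p.2.head?, Γ.r e = p.1) ∧ p.2.Chain' fun a b => Γ.d a = Γ.r b

def src (Γ : SSGraph V E) (p : Pth V E) : V :=
  match p.2.getLast? with
  | none => p.1
  | some e => Γ.d e

def comp (p q : Pth V E) : Pth V E := (p.1, p.2 ++ q.2)

def ofVertex (v : V) : Pth V E := (v, [])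

def ofEdge (Γ : SSGraph V E) (e : E) : Pth V E := (Γ.r e, [e])

structure GraphAction (G : Type*) [Group G] (Γ : SSGraph V E) where
  actV : G → V → V
  actE : G → E → E
  actV_one : ∀ v, actV 1 v = v
  actV_mul : ∀ g h v, actV (g * h) v = actV g (actV h v)
  actE_one : ∀ e, actE 1 e = e
  actE_mul : ∀ g h e, actE (g * h) e = actE g (actE h e)
  r_act : ∀ g e, Γ.r (actE g e) = actV g (Γ.r e)
  d_act : ∀ g e, Γ.d (actE g e) = actV g (Γ.d e)

structure EdgeCocycle {G : Type*} [Group G] {Γ : SSGraph V E} (GA : GraphAction G Γ) where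
  φ : G → E → G
  cocycle : ∀ g h e, φ (g * h) e = φ g (GA.actE h e) * φ h e
  vertex_compat : ∀ g e v, GA.actV (φ g e) v = GA.actV g v

/-- The extension of a self-similar `(G,E,φ)`-datum to the set of all finite paths,
with all the properties listed in the extension proposition. -/
structure PathSystem {G : Type*} [Group G] {Γ : SSGraph V E} {GA : GraphAction G Γ}
    (c : EdgeCocycle GA) where
  act : G → Pth V E → Pth V E
  coc : G → Pth V E → G
  act_vertex : ∀ g v, act g (ofVertex v) = ofVertex (GA.actV g v)
  act_edge : ∀ g e, act g (Γ.ofEdge e) = Γ.ofEdge (GA.actE g e)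
  coc_vertex : ∀ g v, coc g (ofVertex v) = g
  coc_edge : ∀ g e, coc g (Γ.ofEdge e) = c.φ g e
  isPath_act : ∀ g p, Γ.IsPath p → Γ.IsPath (act g p)
  length_act : ∀ g p, Γ.IsPath p → (act g p).2.length = p.2.length
  ran_act : ∀ g p, Γ.IsPath p → (act g p).1 = GA.actV g p.1
  src_act : ∀ g p, Γ.IsPath p → Γ.src (act g p) = GA.actV g (Γ.src p)
  coc_vertex_act : ∀ g p v, Γ.IsPath p → GA.actV (coc g p) v = GA.actV g v
  act_one : ∀ p, Γ.IsPath p → act 1 p = p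
  act_mul : ∀ g h p, Γ.IsPath p → act (g * h) p = act g (act h p)
  coc_mul : ∀ g h p, Γ.IsPath p → coc (g * h) p = coc g (act h p) * coc h p
  act_comp : ∀ g p q, Γ.IsPath p → Γ.IsPath q → Γ.src p = q.1 →
    act g (comp p q) = comp (act g p) (act (coc g p) q)
  coc_comp : ∀ g p q, Γ.IsPath p → Γ.IsPath q → Γ.src p = q.1 →
    coc g (comp p q) = coc (coc g p) q

def PseudoFree {G : Type*} [Group G] {Γ : SSGraph V E} (GA : GraphAction G Γ)
    (c : EdgeCocycle GA) : Prop :=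
  ∀ g e, GA.actE g e = e → c.φ g e = 1 → g = 1

/-! ### The inverse semigroup `S_{G,E}` -/

def SgeCond {G : Type*} [Group G] (Γ : SSGraph V E) (GA : GraphAction G Γ)
    (t : Pth V E × G × Pth V E) : Prop :=
  Γ.IsPath t.1 ∧ Γ.IsPath t.2.2 ∧ Γ.src t.1 = GA.actV t.2.1 (Γ.src t.2.2)

def sgeSet {G : Type*} [Group G] (Γ : SSGraph V E) (GA : GraphAction G Γ) :
    Set (Option (Pth V E × G × Pth V E)) :=
  {x | x = none ∨ ∃ t, x = some t ∧ SgeCond Γ GA t}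

def sgeMulAux {G : Type*} [Group G] {Γ : SSGraph V E} {GA : GraphAction G Γ}
    {c : EdgeCocycle GA} (S : PathSystem c) :
    Pth V E × G × Pth V E → Pth V E × G × Pth V E → Option (Pth V E × G × Pth V E) :=
  fun x y =>
    if x.2.2.1 = y.1.1 ∧ x.2.2.2 <+: y.1.2 then
      let ε : Pth V E := (Γ.src x.2.2, y.1.2.drop x.2.2.2.length)
      some (comp x.1 (S.act x.2.1 ε), S.coc x.2.1 ε * y.2.1, y.2.2)
    else if y.1.1 = x.2.2.1 ∧ y.1.2 <+: x.2.2.2 then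
      let ε : Pth V E := (Γ.src y.1, x.2.2.2.drop y.1.2.length)
      some (x.1, x.2.1 * (S.coc y.2.1⁻¹ ε)⁻¹, comp y.2.2 (S.act y.2.1⁻¹ ε))
    else none

def sgeMul {G : Type*} [Group G] {Γ : SSGraph V E} {GA : GraphAction G Γ}
    {c : EdgeCocycle GA} (S : PathSystem c) :
    Option (Pth V E × G × Pth V E) → Option (Pth V E × G × Pth V E) →
      Option (Pth V E × G × Pth V E)
  | some x, some y => sgeMulAux S x y
  | _, _ => none

def sgeStar {G : Type*} [Group G] :
    Option (Pth V E × G × Pth V E) → Option (Pth V E × G × Pth V E)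
  | none => none
  | some t => some (t.2.2, t.2.1⁻¹, t.1)

/-! ### Infinite paths -/

def InfPath (Γ : SSGraph V E) (ξ : ℕ → E) : Prop :=
  ∀ n, Γ.d (ξ n) = Γ.r (ξ (n + 1))

/-- Truncation of an infinite path: the finite path formed by its first `n` edges.
(Index `n` of the sequence is the `(n+1)`-st edge of the path.) -/
def trunc (Γ : SSGraph V E) (ξ : ℕ → E) (n : ℕ) : Pth V E :=
  (Γ.r (ξ 0), (List.range n).map ξ)

/-- Concatenation `αξ` of a finite path with an infinite path. -/
def compInf (α : Pth V E) (ξ : ℕ → E) : ℕ → E :=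
  fun n => α.2.getD n (ξ (n - α.2.length))

/-- `Phi S g ξ n = φ(g, ξ|_n)`, i.e. the entry of the sequence `Φ(g,ξ) ∈ G^∞` at the
`(n+1)`-st position in the 1-based indexing of the paper. -/
def Phi {G : Type*} [Group G] {Γ : SSGraph V E} {GA : GraphAction G Γ}
    {c : EdgeCocycle GA} (S : PathSystem c) (g : G) (ξ : ℕ → E) : ℕ → G :=
  fun n => S.coc g (Γ.trunc ξ n)

/-- The extension of the self-similar action to infinite paths. -/
structure InfAction {G : Type*} [Group G] {Γ : SSGraph V E} {GA : GraphAction G Γ}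
    {c : EdgeCocycle GA} (S : PathSystem c) where
  a : G → (ℕ → E) → (ℕ → E)
  isInf : ∀ g ξ, Γ.InfPath ξ → Γ.InfPath (a g ξ)
  a_one : ∀ ξ, Γ.InfPath ξ → a 1 ξ = ξ
  a_mul : ∀ g h ξ, Γ.InfPath ξ → a (g * h) ξ = a g (a h ξ)
  trunc_a : ∀ g ξ n, Γ.InfPath ξ → Γ.trunc (a g ξ) n = S.act g (Γ.trunc ξ n)

/-- `η` belongs to the cylinder `Z(β)`. -/
def InCyl (Γ : SSGraph V E) (β : Pth V E) (η : ℕ → E) : Prop :=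
  Γ.r (η 0) = β.1 ∧ ∀ n (hn : n < β.2.length), η n = β.2[n]'hn

/-- Equality of germs `[α₁,g₁,β₁; η₁] = [α₂,g₂,β₂; η₂]` for the action of `S_{G,E}`
on the infinite path space. -/
def germEqv {G : Type*} [Group G] {Γ : SSGraph V E} {GA : GraphAction G Γ}
    {c : EdgeCocycle GA} (S : PathSystem c)
    (α₁ : Pth V E) (g₁ : G) (β₁ : Pth V E) (η₁ : ℕ → E)
    (α₂ : Pth V E) (g₂ : G) (β₂ : Pth V E) (η₂ : ℕ → E) : Prop :=
  η₁ = η₂ ∧ ∃ δ : Pth V E, Γ.IsPath δ ∧ Γ.InCyl δ η₁ ∧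
    sgeMul S (some (α₁, g₁, β₁)) (some (δ, 1, δ)) =
      sgeMul S (some (α₂, g₂, β₂)) (some (δ, 1, δ))

/-- The partial isometry `s_α` associated to a finite path. -/
def sPath {A : Type*} [Monoid A] (pv : V → A) (se : E → A) : Pth V E → A :=
  fun x =>
    match x with
    | (v, []) => pv v
    | (_, es) => (es.map se).prod

end SSGraph

end

/-! All of `β₁`, `β₂` and a cutting path `δ` are truncations of the same infinite path `η`.
Against the idempotent `(δ,1,δ)`, a triple `(α,g,β)` with `β` shorter than `δ = βε` becomes
`(α·(g·ε), φ(g,ε), δ)`, while for `δ` strictly shorter than `β` it is left unchanged. For long `δ`,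
splitting `ε₁ = γε₂` and using the cocycle identities turns the equality of the two products into
`α₂ = α₁(g₁·γ)`, `k·ε₂ = g₂·ε₂` and `φ(k,ε₂) = φ(g₂,ε₂)` with `k = φ(g₁,γ)`; pseudo-freeness,
propagated edge by edge along `ε₂`, gives `k = g₂`. For short `δ` the products can only agree
when the two triples coincide. -/

namespace SSGraph

variable {V E G : Type*} {Γ : SSGraph V E}

lemma comp_assoc (p q r : Pth V E) : comp (comp p q) r = comp p (comp q r) := by
  simp [comp]

@[simp]
lemma comp_ofVertex (p : Pth V E) (v : V) : comp p (ofVertex v) = p := by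
  simp [comp, ofVertex]

lemma eq_of_comp_eq_comp {p p' q q' : Pth V E} (h : comp p q = comp p' q')
    (hlen : q.2.length = q'.2.length) : p = p' ∧ q.2 = q'.2 := by
  obtain ⟨h₁, h₂⟩ := Prod.ext_iff.mp h
  obtain ⟨hp, hq⟩ := List.append_inj' h₂ hlen
  exact ⟨Prod.ext h₁ hp, hq⟩

lemma cons_eq_comp_ofEdge (v : V) (e : E) (l : List E) (he : Γ.r e = v) :
    ((v, e :: l) : Pth V E) = comp (Γ.ofEdge e) (Γ.d e, l) := by
  simp [comp, ofEdge, he]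

lemma isPath_iff (p : Pth V E) : Γ.IsPath p ↔
    (∀ e ∈ p.2.head?, Γ.r e = p.1) ∧ p.2.IsChain fun a b => Γ.d a = Γ.r b :=
  Iff.rfl

lemma isPath_cons_iff {v : V} {e : E} {l : List E} :
    Γ.IsPath (v, e :: l) ↔ Γ.r e = v ∧ Γ.IsPath (Γ.d e, l) := by
  cases l <;> simp [isPath_iff, eq_comm]

lemma isPath_ofEdge (e : E) : Γ.IsPath (Γ.ofEdge e) :=
  isPath_cons_iff.mpr ⟨rfl, by simp [isPath_iff]⟩

section InfinitePaths

variable {η : ℕ → E}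

@[simp]
lemma length_trunc (η : ℕ → E) (n : ℕ) : (Γ.trunc η n).2.length = n := by
  simp [trunc]

lemma trunc_zero (η : ℕ → E) : Γ.trunc η 0 = ofVertex (Γ.r (η 0)) := rfl

lemma trunc_add (η : ℕ → E) (a b : ℕ) :
    Γ.trunc η (a + b) = comp (Γ.trunc η a) (Γ.trunc (fun i => η (a + i)) b) := by
  simp [trunc, comp, List.range_add]

lemma trunc_eq_comp_of_le (η : ℕ → E) {a b : ℕ} (h : a ≤ b) :
    Γ.trunc η b = comp (Γ.trunc η a) (Γ.trunc (fun i => η (a + i)) (b - a)) := by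
  rw [← trunc_add, Nat.add_sub_cancel' h]

lemma InCyl.eq_trunc {β : Pth V E} (h : Γ.InCyl β η) : β = Γ.trunc η β.2.length :=
  Prod.ext h.1.symm <| List.ext_getElem (by simp) fun n hn _ => by simp [trunc, h.2 n hn]

lemma compInf_trunc (η : ℕ → E) (n : ℕ) : compInf (Γ.trunc η n) (fun i => η (n + i)) = η := by
  funext k
  by_cases hk : k < n
  · simp [compInf, trunc, hk]
  · simp [compInf, trunc, hk, Nat.add_sub_cancel' (not_lt.mp hk)]

lemma InfPath.shift (hη : Γ.InfPath η) (a : ℕ) : Γ.InfPath fun i => η (a + i) :=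
  fun i => hη (a + i)

lemma InfPath.isPath_trunc (hη : Γ.InfPath η) (n : ℕ) : Γ.IsPath (Γ.trunc η n) := by
  refine (isPath_iff _).mpr ⟨?_, ?_⟩
  · cases n <;> simp [trunc, List.range_succ_eq_map]
  · simpa [trunc, List.isChain_map, List.isChain_range] using fun m _ => hη m

lemma InfPath.src_trunc (hη : Γ.InfPath η) (n : ℕ) : Γ.src (Γ.trunc η n) = Γ.r (η n) := by
  cases n with
  | zero => rfl
  | succ n => simp [src, trunc, List.range_succ, hη n]

end InfinitePaths

variable [Group G] {GA : GraphAction G Γ} {c : EdgeCocycle GA}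

@[simp]
lemma EdgeCocycle.φ_one (e : E) : c.φ 1 e = 1 := by
  simpa [GA.actE_one] using c.cocycle 1 1 e

lemma PseudoFree.eq_of_actE_eq_of_φ_eq (hpf : PseudoFree GA c) {g h : G} {e : E}
    (hact : GA.actE g e = GA.actE h e) (hφ : c.φ g e = c.φ h e) : g = h := by
  have hfix : GA.actE (h⁻¹ * g) e = e := by
    rw [GA.actE_mul, hact, ← GA.actE_mul, inv_mul_cancel, GA.actE_one]
  have htriv : c.φ (h⁻¹ * g) e = 1 := by
    rw [c.cocycle, hact, hφ, ← c.cocycle, inv_mul_cancel, EdgeCocycle.φ_one]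
  exact (inv_mul_eq_one.mp (hpf _ e hfix htriv)).symm

namespace PathSystem

variable (S : PathSystem c)

lemma coc_one {p : Pth V E} (hp : Γ.IsPath p) : S.coc 1 p = 1 := by
  simpa [S.act_one p hp] using S.coc_mul 1 1 p hp

lemma act_cons (g : G) {v : V} {e : E} {l : List E} (hp : Γ.IsPath (v, e :: l)) :
    S.act g (v, e :: l) = comp (Γ.ofEdge (GA.actE g e)) (S.act (c.φ g e) (Γ.d e, l)) := by
  obtain ⟨he, hl⟩ := isPath_cons_iff.mp hp
  rw [cons_eq_comp_ofEdge v e l he, S.act_comp _ _ _ (isPath_ofEdge e) hl rfl, S.act_edge,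
    S.coc_edge]

lemma coc_cons (g : G) {v : V} {e : E} {l : List E} (hp : Γ.IsPath (v, e :: l)) :
    S.coc g (v, e :: l) = S.coc (c.φ g e) (Γ.d e, l) := by
  obtain ⟨he, hl⟩ := isPath_cons_iff.mp hp
  rw [cons_eq_comp_ofEdge v e l he, S.coc_comp _ _ _ (isPath_ofEdge e) hl rfl, S.coc_edge]

end PathSystem

lemma PseudoFree.eq_of_act_eq_of_coc_eq (hpf : PseudoFree GA c) (S : PathSystem c)
    {g h : G} {p : Pth V E} (hp : Γ.IsPath p) (hact : (S.act g p).2 = (S.act h p).2)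
    (hcoc : S.coc g p = S.coc h p) : g = h := by
  obtain ⟨v, l⟩ := p
  induction l generalizing v g h with
  | nil => exact (S.coc_vertex g v).symm.trans (hcoc.trans (S.coc_vertex h v))
  | cons e l ih =>
    rw [S.act_cons g hp, S.act_cons h hp] at hact
    rw [S.coc_cons g hp, S.coc_cons h hp] at hcoc
    simp only [comp, ofEdge, List.cons_append, List.nil_append, List.cons.injEq] at hact
    exact hpf.eq_of_actE_eq_of_φ_eq hact.1
      (ih _ (isPath_cons_iff.mp hp).2 hact.2 hcoc)

section Germs

variable (S : PathSystem c)

lemma sgeMul_comp_idempotent (α : Pth V E) (g : G) {β ε : Pth V E} (hsrc : Γ.src β = ε.1) :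
    sgeMul S (some (α, g, β)) (some (comp β ε, 1, comp β ε)) =
      some (comp α (S.act g ε), S.coc g ε, comp β ε) := by
  simp only [sgeMul, sgeMulAux]
  rw [if_pos ⟨rfl, List.prefix_append _ _⟩]
  simp [comp, hsrc]

lemma sgeMul_idempotent_self (α : Pth V E) (g : G) (β : Pth V E) :
    sgeMul S (some (α, g, β)) (some (β, 1, β)) = some (α, g, β) := by
  simpa [S.act_vertex, S.coc_vertex] using
    sgeMul_comp_idempotent S α g (ε := ofVertex (Γ.src β)) rfl

lemma sgeMul_comp_idempotent_of_ne_nil (α : Pth V E) (g : G) {δ ε : Pth V E}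
    (hε : Γ.IsPath ε) (hsrc : Γ.src δ = ε.1) (hne : ε.2 ≠ []) :
    sgeMul S (some (α, g, comp δ ε)) (some (δ, 1, δ)) = some (α, g, comp δ ε) := by
  have hlong : ¬(δ.2 ++ ε.2) <+: δ.2 := fun h => hne (by simpa using h.length_le)
  simp only [sgeMul, sgeMulAux]
  rw [if_neg (fun h => hlong h.2), if_pos ⟨rfl, List.prefix_append _ _⟩]
  have hdrop : ((Γ.src δ, (comp δ ε).2.drop δ.2.length) : Pth V E) = ε := by
    simp [comp, hsrc]
  simp [hdrop, S.act_one ε hε, S.coc_one hε]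

variable {η : ℕ → E} (hη : Γ.InfPath η)
include hη

lemma sgeMul_trunc_of_le (α : Pth V E) (g : G) {a b : ℕ} (h : a ≤ b) :
    sgeMul S (some (α, g, Γ.trunc η a)) (some (Γ.trunc η b, 1, Γ.trunc η b)) =
      some (comp α (S.act g (Γ.trunc (fun i => η (a + i)) (b - a))),
        S.coc g (Γ.trunc (fun i => η (a + i)) (b - a)), Γ.trunc η b) := by
  rw [trunc_eq_comp_of_le η h]
  exact sgeMul_comp_idempotent S α g (hη.src_trunc a)

lemma sgeMul_trunc_of_lt (α : Pth V E) (g : G) {a b : ℕ} (h : b < a) :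
    sgeMul S (some (α, g, Γ.trunc η a)) (some (Γ.trunc η b, 1, Γ.trunc η b)) =
      some (α, g, Γ.trunc η a) := by
  rw [trunc_eq_comp_of_le η h.le]
  refine sgeMul_comp_idempotent_of_ne_nil S α g ((hη.shift b).isPath_trunc _) (hη.src_trunc b) ?_
  rw [← List.length_pos_iff, length_trunc]
  omega

lemma eq_restrict_of_sgeMul_trunc_eq (hpf : PseudoFree GA c) {α₁ α₂ : Pth V E} {g₁ g₂ : G}
    {n₁ n₂ m : ℕ} (hle : n₁ ≤ n₂)
    (h : sgeMul S (some (α₁, g₁, Γ.trunc η n₁)) (some (Γ.trunc η m, 1, Γ.trunc η m)) =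
      sgeMul S (some (α₂, g₂, Γ.trunc η n₂)) (some (Γ.trunc η m, 1, Γ.trunc η m))) :
    α₂ = comp α₁ (S.act g₁ (Γ.trunc (fun i => η (n₁ + i)) (n₂ - n₁))) ∧
      g₂ = S.coc g₁ (Γ.trunc (fun i => η (n₁ + i)) (n₂ - n₁)) := by
  set γ := Γ.trunc (fun i => η (n₁ + i)) (n₂ - n₁)
  rcases le_or_gt n₂ m with h₂ | h₂
  · rw [sgeMul_trunc_of_le S hη _ _ (hle.trans h₂), sgeMul_trunc_of_le S hη _ _ h₂] at h
    set ε := Γ.trunc (fun i => η (n₂ + i)) (m - n₂)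
    have hsplit : Γ.trunc (fun i => η (n₁ + i)) (m - n₁) = comp γ ε := by
      rw [trunc_eq_comp_of_le _ (show n₂ - n₁ ≤ m - n₁ by omega),
        show m - n₁ - (n₂ - n₁) = m - n₂ by omega]
      congr 3 with i
      congr 1
      omega
    have hγ : Γ.IsPath γ := (hη.shift n₁).isPath_trunc _
    have hε : Γ.IsPath ε := (hη.shift n₂).isPath_trunc _
    have hγε : Γ.src γ = ε.1 := by
      rw [(hη.shift n₁).src_trunc]
      simp only [Nat.add_sub_cancel' hle]
      rfl
    rw [hsplit, S.act_comp _ _ _ hγ hε hγε, S.coc_comp _ _ _ hγ hε hγε, ← comp_assoc] at h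
    simp only [Option.some.injEq, Prod.mk.injEq] at h
    obtain ⟨hα, hact⟩ := eq_of_comp_eq_comp h.1 (by rw [S.length_act _ _ hε, S.length_act _ _ hε])
    exact ⟨hα.symm, (hpf.eq_of_act_eq_of_coc_eq S hε hact h.2.1).symm⟩
  · rw [sgeMul_trunc_of_lt S hη _ _ h₂] at h
    rcases le_or_gt n₁ m with h₁ | h₁
    · rw [sgeMul_trunc_of_le S hη _ _ h₁] at h
      have := congrArg (fun x => x.map fun t => t.2.2.2.length) h
      simp only [Option.map_some, length_trunc, Option.some.injEq] at this
      omega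
    · rw [sgeMul_trunc_of_lt S hη _ _ h₁] at h
      simp only [Option.some.injEq, Prod.mk.injEq] at h
      obtain ⟨rfl, rfl, hβ⟩ := h
      obtain rfl : n₁ = n₂ := by simpa using congrArg (fun x => x.2.length) hβ
      simp [γ, trunc_zero, S.act_vertex, S.coc_vertex]

end Germs

end SSGraph

open SSGraph in
theorem germ_equality_criterion_general {V E G : Type*} [Group G]
    (Γ : SSGraph V E)
    (GA : SSGraph.GraphAction G Γ) (c : SSGraph.EdgeCocycle GA)
    (S : PathSystem c) (hpf : PseudoFree GA c) :
    ∀ (α₁ : Pth V E) (g₁ : G) (β₁ : Pth V E) (η₁ : ℕ → E)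
      (α₂ : Pth V E) (g₂ : G) (β₂ : Pth V E) (η₂ : ℕ → E),
      SgeCond Γ GA (α₁, g₁, β₁) → SgeCond Γ GA (α₂, g₂, β₂) →
      Γ.InfPath η₁ → Γ.InfPath η₂ → Γ.InCyl β₁ η₁ → Γ.InCyl β₂ η₂ →
      β₁.2.length ≤ β₂.2.length →
      (germEqv S α₁ g₁ β₁ η₁ α₂ g₂ β₂ η₂ ↔
        ∃ (γ : Pth V E) (ξ : ℕ → E), Γ.IsPath γ ∧ Γ.InfPath ξ ∧
          Γ.src β₁ = γ.1 ∧ Γ.src γ = Γ.r (ξ 0) ∧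
          α₂ = comp α₁ (S.act g₁ γ) ∧
          g₂ = S.coc g₁ γ ∧
          β₂ = comp β₁ γ ∧
          η₁ = η₂ ∧ η₁ = compInf (comp β₁ γ) ξ) := by
  rintro α₁ g₁ β₁ η₁ α₂ g₂ β₂ η₂ - ⟨-, hβ₂, -⟩ hη - hβ₁η hβ₂η hle
  constructor
  · rintro ⟨rfl, δ, -, hδη, h⟩
    obtain ⟨n₁, rfl⟩ : ∃ n, β₁ = Γ.trunc η₁ n := ⟨_, hβ₁η.eq_trunc⟩
    obtain ⟨n₂, rfl⟩ : ∃ n, β₂ = Γ.trunc η₁ n := ⟨_, hβ₂η.eq_trunc⟩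
    obtain ⟨m, rfl⟩ : ∃ n, δ = Γ.trunc η₁ n := ⟨_, hδη.eq_trunc⟩
    rw [length_trunc, length_trunc] at hle
    have hβ := trunc_eq_comp_of_le (Γ := Γ) η₁ hle
    obtain ⟨hα, hg⟩ := eq_restrict_of_sgeMul_trunc_eq S hη hpf hle h
    refine ⟨_, fun i => η₁ (n₂ + i), (hη.shift n₁).isPath_trunc _, hη.shift n₂,
      hη.src_trunc n₁, ?_, hα, hg, hβ, rfl, by rw [← hβ, compInf_trunc]⟩
    rw [(hη.shift n₁).src_trunc]
    simp only [Nat.add_sub_cancel' hle, add_zero]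
  · rintro ⟨γ, ξ, -, -, hsrc, -, rfl, rfl, rfl, rfl, -⟩
    exact ⟨rfl, _, hβ₂, hβ₂η, by rw [sgeMul_comp_idempotent S _ _ hsrc, sgeMul_idempotent_self]⟩

open SSGraph in
theorem germ_equality_criterion {V E G : Type*} [Group G] [Countable G] [Fintype V] [Fintype E]
    (Γ : SSGraph V E) (hns : ∀ v : V, ∃ e, Γ.r e = v)
    (GA : SSGraph.GraphAction G Γ) (c : SSGraph.EdgeCocycle GA)
    (S : PathSystem c) (hpf : PseudoFree GA c) :
    ∀ (α₁ : Pth V E) (g₁ : G) (β₁ : Pth V E) (η₁ : ℕ → E)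
      (α₂ : Pth V E) (g₂ : G) (β₂ : Pth V E) (η₂ : ℕ → E),
      SgeCond Γ GA (α₁, g₁, β₁) → SgeCond Γ GA (α₂, g₂, β₂) →
      Γ.InfPath η₁ → Γ.InfPath η₂ → Γ.InCyl β₁ η₁ → Γ.InCyl β₂ η₂ →
      β₁.2.length ≤ β₂.2.length →
      (germEqv S α₁ g₁ β₁ η₁ α₂ g₂ β₂ η₂ ↔
        ∃ (γ : Pth V E) (ξ : ℕ → E), Γ.IsPath γ ∧ Γ.InfPath ξ ∧
          Γ.src β₁ = γ.1 ∧ Γ.src γ = Γ.r (ξ 0) ∧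
          α₂ = comp α₁ (S.act g₁ γ) ∧
          g₂ = S.coc g₁ γ ∧
          β₂ = comp β₁ γ ∧
          η₁ = η₂ ∧ η₁ = compInf (comp β₁ γ) ξ) :=
  germ_equality_criterion_general Γ GA c S hpf
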